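/- Consider the 12 configurations (C, O) with C ∈ {none, object, session, explicit} and O ∈ {trivial, object, all}, with readability ⪯ evaluated under causal arbitration, and let ≈ be mutual readability (A ≈ B iff A ⪯ B and B ⪯ A). Then the quotient of the 12 configurations by ≈ has exactly 8 classes: at O = trivial the four closure scopes are pairwise inequivalent (4 classes); at O = object, (none, object) ≈ (object, object) while (session, object) and (explicit, object) are distinct from these and from each other (3 classes); at O = all, all four configurations (C, all) are equivalent (1 class). -/

import Mathlib

/-- Closure scopes. -/
inductive CScope
  | none | object | session | explicit
deriving DecidableEq

/-- Ordering scopes. -/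
inductive OScope
  | trivial | object | all
deriving DecidableEq

/-- A finite labeled causal DAG: a finite type of messages with an irreflexive
acyclic edge relation and object/session labels. -/
structure LDag where
  M : Type
  [fin : Fintype M]
  O0 : Type
  S0 : Type
  E : M → M → Prop
  irr : Irreflexive E
  acyc : Irreflexive (Relation.TransGen E)
  obj : M → O0
  sess : M → S0

/-- The closure filters `deps_C`. -/
def LDag.deps (G : LDag) : CScope → G.M → Set G.M
  | .none, _ => ∅
  | .object, m => {m' | G.E m' m ∧ G.obj m' = G.obj m}
  | .session, m => {m' | G.E m' m ∧ G.sess m' = G.sess m}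
  | .explicit, m => {m' | G.E m' m}

/-- Same-class relation of an ordering scope. -/
def LDag.sameClass (G : LDag) : OScope → G.M → G.M → Prop
  | .trivial, a, b => a = b
  | .object, a, b => G.obj a = G.obj b
  | .all, _, _ => True

/-- `V` is closed under the filter `deps_C`. -/
def LDag.closedUnder (G : LDag) (C : CScope) (V : Set G.M) : Prop :=
  ∀ m ∈ V, G.deps C m ⊆ V

/-- `V` is a per-class prefix for the ordering scope `O` w.r.t. `prec`. -/
def LDag.isPrefix (G : LDag) (O : OScope) (prec : G.M → G.M → Prop) (V : Set G.M) : Prop :=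
  ∀ m ∈ V, ∀ m', G.sameClass O m' m → prec m' m → m' ∈ V

/-- A cut `V` is admissible under the configuration `(C, O)` w.r.t. `(E, prec)`. -/
def LDag.admissible (G : LDag) (prec : G.M → G.M → Prop) (C : CScope) (O : OScope)
    (V : Set G.M) : Prop :=
  G.closedUnder C V ∧ G.isPrefix O prec V

/-- `prec` refines the causal order (causal arbitration). -/
def LDag.refines (G : LDag) (prec : G.M → G.M → Prop) : Prop :=
  ∀ m' m, G.E m' m → prec m' m

/-- A configuration is a pair of a closure scope and an ordering scope. -/
abbrev Config := CScope × OScope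

/-- Readability under causal arbitration: every `A`-admissible cut is
`B`-admissible, on every finite labeled causal DAG and every strict linear
order refining the causal edges. -/
def Readable (A B : Config) : Prop :=
  ∀ G : LDag, ∀ prec : G.M → G.M → Prop,
    IsStrictTotalOrder G.M prec → G.refines prec →
    ∀ V : Set G.M, G.admissible prec A.1 A.2 V → G.admissible prec B.1 B.2 V

/-- The chain `trivial < object < all` on ordering scopes, as a rank. -/
def OScope.rank : OScope → ℕ
  | .trivial => 0
  | .object => 1
  | .all => 2

/-- The κ map: the closure entailed by an ordering scope. -/
def kappa : OScope → CScope
  | .trivial => .none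
  | .object => .object
  | .all => .explicit

/-- Mutual readability under causal arbitration. -/
def MutuallyReadable (A B : Config) : Prop :=
  Readable A B ∧ Readable B A

theorem readable_refl (A : Config) : Readable A A :=
  fun _ _ _ _ _ h => h

theorem readable_trans {A B C : Config} (h₁ : Readable A B) (h₂ : Readable B C) :
    Readable A C :=
  fun G prec hs hr V hV => h₂ G prec hs hr V (h₁ G prec hs hr V hV)

/-- Mutual readability is an equivalence on the 12 configurations. -/
def readEqv : Setoid Config :=
  ⟨MutuallyReadable,
    ⟨fun A => ⟨readable_refl A, readable_refl A⟩,
     fun h => ⟨h.2, h.1⟩,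
     fun h₁ h₂ => ⟨readable_trans h₁.1 h₂.1, readable_trans h₂.2 h₁.2⟩⟩⟩

/-!
Within one ordering scope, a per-class prefix is automatically closed under every filter whose
dependencies stay inside the class of the message, because `≺` refines `E`. This yields
`(none, object) ≈ (object, object)` and `(C, all) ≈ (C', all)`. Every inequivalence is witnessed by
a single two-message DAG `false → true` with the cut `{true}`, varied over whether the edge is
present and whether the two messages share their object and their session. So mutual readability
is exactly equality of the admissibility table of that cut over the eight variants, and this table
takes eight distinct values on the twelve configurations.
-/

instance : Fintype CScope :=
  ⟨{.none, .object, .session, .explicit}, fun C => by cases C <;> simp⟩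

instance : Fintype OScope :=
  ⟨{.trivial, .object, .all}, fun O => by cases O <;> simp⟩

namespace LDag

variable {G : LDag} {prec : G.M → G.M → Prop} {C : CScope} {O : OScope} {V : Set G.M}

theorem edge_of_mem_deps {m m' : G.M} (h : m' ∈ G.deps C m) : G.E m' m := by
  cases C
  exacts [h.elim, h.1, h.1, h]

theorem closedUnder_of_isPrefix (hr : G.refines prec)
    (hC : ∀ m, ∀ m' ∈ G.deps C m, G.sameClass O m' m) (hV : G.isPrefix O prec V) :
    G.closedUnder C V :=
  fun m hm m' hm' => hV m hm m' (hC m m' hm') (hr m' m (edge_of_mem_deps hm'))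

end LDag

theorem readable_of_deps_sameClass {C C' : CScope} {O : OScope}
    (h : ∀ G : LDag, ∀ m, ∀ m' ∈ G.deps C' m, G.sameClass O m' m) :
    Readable (C, O) (C', O) :=
  fun G _ _ hr _ hV => ⟨LDag.closedUnder_of_isPrefix hr (h G) hV.2, hV.2⟩

/-- Messages `false` and `true`; the edge `false → true` is present iff `e`, and the two messages
share their object iff `o` and their session iff `s`. -/
def testDag (e o s : Bool) : LDag where
  M := Bool
  O0 := Bool
  S0 := Bool
  E a b := e = true ∧ a < b
  irr _ h := lt_irrefl _ h.2
  acyc a h := lt_irrefl a <| by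
    have h' : Relation.TransGen (· < ·) a a := Relation.TransGen.mono (fun _ _ h => h.2) _ _ h
    rwa [Relation.transGen_eq_self] at h'
  obj m := o || m
  sess m := s || m

theorem testDag_refines (e o s : Bool) : (testDag e o s).refines (fun a b : Bool => a < b) :=
  fun _ _ h => h.2

/-- Whether the filter `deps_C` of `testDag true o s` sees the edge. -/
def CScope.seesEdge : CScope → Bool → Bool → Bool
  | .none, _, _ => false
  | .object, o, _ => o
  | .session, _, s => s
  | .explicit, _, _ => true

/-- Whether the two messages of `testDag e o s` lie in one class of the ordering scope. -/
def OScope.joins : OScope → Bool → Bool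
  | .trivial, _ => false
  | .object, o => o
  | .all, _ => true

theorem testDag_closedUnder_iff (C : CScope) (e o s : Bool) :
    (testDag e o s).closedUnder C ({true} : Set Bool) ↔ (e && C.seesEdge o s) = false := by
  cases C <;> cases e <;> cases o <;> cases s <;> dsimp only [testDag] <;>
    simp [CScope.seesEdge, LDag.closedUnder, LDag.deps, Set.subset_def]

theorem testDag_isPrefix_iff (O : OScope) (e o s : Bool) :
    (testDag e o s).isPrefix O (fun a b : Bool => a < b) ({true} : Set Bool) ↔
      O.joins o = false := by
  cases O <;> cases o <;> dsimp only [testDag] <;>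
    simp [OScope.joins, LDag.isPrefix, LDag.sameClass]

def testAdmissible (A : Config) (e o s : Bool) : Bool :=
  !(e && A.1.seesEdge o s) && !A.2.joins o

theorem testDag_admissible_iff (A : Config) (e o s : Bool) :
    (testDag e o s).admissible (fun a b : Bool => a < b) A.1 A.2 ({true} : Set Bool) ↔
      testAdmissible A e o s = true := by
  refine (and_congr (testDag_closedUnder_iff A.1 e o s) (testDag_isPrefix_iff A.2 e o s)).trans ?_
  simp only [testAdmissible, Bool.and_eq_true, Bool.not_eq_true']

theorem testAdmissible_le_of_readable {A B : Config} (h : Readable A B) :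
    testAdmissible A ≤ testAdmissible B := fun e o s =>
  Bool.le_iff_imp.2 fun hA => (testDag_admissible_iff B e o s).1 <|
    h _ _ (inferInstanceAs (IsStrictTotalOrder Bool (· < ·))) (testDag_refines e o s) _
      ((testDag_admissible_iff A e o s).2 hA)

theorem readable_of_testAdmissible_eq {A B : Config} (h : testAdmissible A = testAdmissible B) :
    Readable A B := by
  obtain ⟨C, O⟩ := A
  obtain ⟨C', O'⟩ := B
  cases C <;> cases O <;> cases C' <;> cases O' <;>
    first
    | exact readable_refl _
    | exact readable_of_deps_sameClass fun _ _ _ h => h.2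
    | exact readable_of_deps_sameClass fun _ _ _ h => h.elim
    | exact readable_of_deps_sameClass fun _ _ _ _ => trivial
    | exact absurd h (by decide)

theorem mutuallyReadable_iff_testAdmissible_eq {A B : Config} :
    MutuallyReadable A B ↔ testAdmissible A = testAdmissible B :=
  ⟨fun h => (testAdmissible_le_of_readable h.1).antisymm (testAdmissible_le_of_readable h.2),
    fun h => ⟨readable_of_testAdmissible_eq h, readable_of_testAdmissible_eq h.symm⟩⟩

theorem readEqv_eq_ker_testAdmissible : readEqv = Setoid.ker testAdmissible :=
  Setoid.ext fun _ _ => mutuallyReadable_iff_testAdmissible_eq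

theorem card_quotient_readEqv : Nat.card (Quotient readEqv) = 8 := by
  rw [readEqv_eq_ker_testAdmissible, Nat.card_congr (Setoid.quotientKerEquivRange _),
    Nat.card_eq_card_toFinset, Set.toFinset_range]
  decide

/-- **The 12 configurations collapse to exactly 8 classes.**
The quotient of the 12 configurations by mutual readability has exactly 8
classes: 4 at `O = trivial` (the four closure scopes pairwise inequivalent),
3 at `O = object` (`(none, object) ≈ (object, object)`, with `(session, object)`
and `(explicit, object)` distinct from these and from each other), and
1 at `O = all` (all four closure scopes equivalent). -/
theorem twelve_configs_eight_classes :
    Nat.card (Quotient readEqv) = 8 ∧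
    (∀ C C' : CScope,
      MutuallyReadable (C, OScope.trivial) (C', OScope.trivial) → C = C') ∧
    MutuallyReadable (CScope.none, OScope.object) (CScope.object, OScope.object) ∧
    (¬ MutuallyReadable (CScope.session, OScope.object) (CScope.none, OScope.object)) ∧
    (¬ MutuallyReadable (CScope.explicit, OScope.object) (CScope.none, OScope.object)) ∧
    (¬ MutuallyReadable (CScope.session, OScope.object) (CScope.explicit, OScope.object)) ∧
    (∀ C C' : CScope, MutuallyReadable (C, OScope.all) (C', OScope.all)) := by
  refine ⟨card_quotient_readEqv, ?_⟩
  simp only [mutuallyReadable_iff_testAdmissible_eq]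
  decide
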